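/- arXiv:2509.08739 — 8 statements merged into one kernel-verified Lean document; each statement's English description precedes it below -/
import Mathlib

section
/- Limit of fixed points of the Bregman double-backward operator (Theorem 5.1): Let h(x) = Σ_i x_i(log x_i − 1) on ℝ^n_{++}, let A and B be single-valued operators on ℝ^n_{++} with B continuous, and let (γ_k) be a sequence of positive numbers with γ_k → 0. If x ∈ ℝ^n_{++} is a fixed point of J^h_{γ_k A} ∘ J^h_{γ_k B} for every k, then A(x) + B(x) = 0; that is, lim_{γ_k → 0} Fix(J^h_{γ_k A} J^h_{γ_k B}) ⊂ (A+B)^{-1}(0). -/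
/-!
Put `yₖ = J_{γₖB} x`. The two resolvent equations read `log yₖ = log x + γₖ A x` and
`log x = log yₖ + γₖ B yₖ`, so adding them gives `B yₖ = -A x` for every `k`. The first
equation also shows `yₖ → x` as `γₖ → 0`, hence `B x = -A x` by continuity of `B`.
-/

open Filter Topology

lemma eq_neg_of_add_mul_eq_of_add_mul_eq {ι : Type*} {u v a b : ι → ℝ} {t : ℝ} (ht : t ≠ 0)
    (huv : ∀ i, u i + t * a i = v i) (hvu : ∀ i, v i + t * b i = u i) : b = -a := by
  funext i
  have hsum : t * (a i + b i) = 0 := by linarith [huv i, hvu i]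
  have hab := (mul_eq_zero.mp hsum).resolve_left ht
  simp only [Pi.neg_apply]
  linarith

lemma tendsto_of_log_eq_log_add_mul {α ι : Type*} {l : Filter α} {γ : α → ℝ}
    (hγ : Tendsto γ l (𝓝 0)) {x a : ι → ℝ} (hx : ∀ i, 0 < x i) {y : α → ι → ℝ}
    (hy : ∀ k i, 0 < y k i) (hlog : ∀ k i, Real.log (x i) + γ k * a i = Real.log (y k i)) :
    Tendsto y l (𝓝 x) := by
  refine tendsto_pi_nhds.mpr fun i => ?_
  have hexp : ∀ k, Real.exp (Real.log (x i) + γ k * a i) = y k i := fun k => by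
    rw [hlog k i, Real.exp_log (hy k i)]
  have hlim : Tendsto (fun k => Real.exp (Real.log (x i) + γ k * a i)) l
      (𝓝 (Real.exp (Real.log (x i) + 0 * a i))) :=
    (Real.continuous_exp.tendsto _).comp (tendsto_const_nhds.add (hγ.mul_const (a i)))
  rw [zero_mul, add_zero, Real.exp_log (hx i)] at hlim
  exact hlim.congr hexp

theorem bdbm_entropy_fixed_point_limit_general (n : ℕ)
    (A B : (Fin n → ℝ) → (Fin n → ℝ)) (hB : Continuous B)
    (γ : ℕ → ℝ) (hγpos : ∀ k, 0 < γ k)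
    (hγ0 : Filter.Tendsto γ Filter.atTop (nhds 0))
    (JA JB : ℝ → (Fin n → ℝ) → (Fin n → ℝ))
    (hJA : ∀ t, 0 < t → ∀ w r, (∀ i, 0 < w i) → (∀ i, 0 < r i) →
      (JA t w = r ↔ ∀ i, Real.log (r i) + t * A r i = Real.log (w i)))
    (hJB : ∀ t, 0 < t → ∀ w r, (∀ i, 0 < w i) → (∀ i, 0 < r i) →
      (JB t w = r ↔ ∀ i, Real.log (r i) + t * B r i = Real.log (w i)))
    (hJBpos : ∀ t, 0 < t → ∀ w, (∀ i, 0 < w i) → ∀ i, 0 < JB t w i)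
    (x : Fin n → ℝ) (hx : ∀ i, 0 < x i)
    (hfix : ∀ k, x = JA (γ k) (JB (γ k) x)) :
    A x + B x = 0 := by
  set y : ℕ → Fin n → ℝ := fun k => JB (γ k) x
  have hy : ∀ k i, 0 < y k i := fun k => hJBpos (γ k) (hγpos k) x hx
  have hAeq : ∀ k i, Real.log (x i) + γ k * A x i = Real.log (y k i) := fun k =>
    (hJA (γ k) (hγpos k) (y k) x (hy k) hx).mp (hfix k).symm
  have hBeq : ∀ k i, Real.log (y k i) + γ k * B (y k) i = Real.log (x i) := fun k =>
    (hJB (γ k) (hγpos k) x (y k) hx (hy k)).mp rfl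
  have hBy : ∀ k, B (y k) = -A x := fun k =>
    eq_neg_of_add_mul_eq_of_add_mul_eq (hγpos k).ne' (hAeq k) (hBeq k)
  have hylim : Tendsto y atTop (𝓝 x) := tendsto_of_log_eq_log_add_mul hγ0 hx hy hAeq
  have hBx : B x = -A x := by
    refine tendsto_nhds_unique ((hB.tendsto x).comp hylim) ?_
    simp only [Function.comp_def, hBy, tendsto_const_nhds]
  rw [hBx, add_neg_cancel]

/-- **Limit of fixed points of the Bregman double-backward operator (Theorem 5.1).**
With the Boltzmann-Shannon entropy kernel (so the Bregman resolvent of `γT` is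
characterized by `J_{γT}^h w = r ↔ log rᵢ + γ T(r)ᵢ = log wᵢ` on positive vectors),
if `B` is continuous, `γₖ > 0` with `γₖ → 0`, and `x > 0` is a fixed point of
`J_{γₖA}^h ∘ J_{γₖB}^h` for every `k`, then `A x + B x = 0`. -/
theorem bdbm_entropy_fixed_point_limit (n : ℕ)
    (A B : (Fin n → ℝ) → (Fin n → ℝ)) (hB : Continuous B)
    (γ : ℕ → ℝ) (hγpos : ∀ k, 0 < γ k)
    (hγ0 : Filter.Tendsto γ Filter.atTop (nhds 0))
    (JA JB : ℝ → (Fin n → ℝ) → (Fin n → ℝ))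
    (hJA : ∀ t, 0 < t → ∀ w r, (∀ i, 0 < w i) → (∀ i, 0 < r i) →
      (JA t w = r ↔ ∀ i, Real.log (r i) + t * A r i = Real.log (w i)))
    (hJB : ∀ t, 0 < t → ∀ w r, (∀ i, 0 < w i) → (∀ i, 0 < r i) →
      (JB t w = r ↔ ∀ i, Real.log (r i) + t * B r i = Real.log (w i)))
    (hJApos : ∀ t, 0 < t → ∀ w, (∀ i, 0 < w i) → ∀ i, 0 < JA t w i)
    (hJBpos : ∀ t, 0 < t → ∀ w, (∀ i, 0 < w i) → ∀ i, 0 < JB t w i)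
    (x : Fin n → ℝ) (hx : ∀ i, 0 < x i)
    (hfix : ∀ k, x = JA (γ k) (JB (γ k) x)) :
    A x + B x = 0 :=
  bdbm_entropy_fixed_point_limit_general n A B hB γ hγpos hγ0 JA JB hJA hJB hJBpos x hx hfix
end

section
/- Per-cycle descent of BPRS under relative smoothness: Let f and g be convex differentiable functions that are L-relatively smooth with respect to a Legendre function h, i.e., f(x) ≤ f(y) + ⟨∇f(y), x − y⟩ + L·D_h(x,y) and g(x) ≤ g(y) + ⟨∇g(y), x − y⟩ + L·D_h(x,y) for all x, y, let F = f + g, and let 0 < γ ≤ 1/L. If y^k := argmin_y { f(x^k) + ⟨∇f(x^k), y − x^k⟩ + g(y) + (1/γ) D_h(y, x^k) } and x^{k+1} := argmin_x { g(y^k) + ⟨∇g(y^k), x − y^k⟩ + f(x) + (1/γ) D_h(x, y^k) }, then F(y^k) ≤ F(x^k) − (1/γ) D_h(x^k, y^k), F(x^{k+1}) ≤ F(y^k) − (1/γ) D_h(y^k, x^{k+1}), and hence F(x^{k+1}) ≤ F(x^k) − (1/γ) D_h(x^k, y^k) − (1/γ) D_h(y^k, x^{k+1}). -/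
/-!
Each half-step of the splitting is a Bregman proximal-gradient step. Its first-order optimality
condition, tested against the direction `x - y`, combines with the three-point identity
`D(x,y) + D(y,x) = ⟨∇h x - ∇h y, x - y⟩`, the gradient inequality for the implicit part and
relative smoothness of the explicit part; since `L ≤ 1/γ` and `D ≥ 0`, the term `L·D(y,x)` from
smoothness is absorbed, leaving the decrease `(1/γ)·D(x,y)`. The two half-steps chain.
-/

open Set

section Bregman

variable {E : Type*} [NormedAddCommGroup E] [NormedSpace ℝ E]

theorem ConvexOn.add_fderiv_sub_le {φ : E → ℝ} (hφ : ConvexOn ℝ univ φ) {x : E}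
    (hd : DifferentiableAt ℝ φ x) (y : E) :
    φ x + fderiv ℝ φ x (y - x) ≤ φ y := by
  let c : ℝ →ᵃ[ℝ] E := AffineMap.lineMap x y
  have hderiv : HasDerivAt (φ ∘ c) (fderiv ℝ φ x (y - x)) 0 := by
    have hd' : HasFDerivAt φ (fderiv ℝ φ x) (c 0) := by
      rw [show c 0 = x from AffineMap.lineMap_apply_zero x y]
      exact hd.hasFDerivAt
    exact hd'.comp_hasDerivAt 0 AffineMap.hasDerivAt_lineMap
  have hconv : ConvexOn ℝ univ (φ ∘ c) := by simpa using hφ.comp_affineMap c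
  have hslope := hconv.le_slope_of_hasDerivAt (mem_univ 0) (mem_univ 1) zero_lt_one hderiv
  simp only [slope_def_field, Function.comp_apply, AffineMap.lineMap_apply_one,
    AffineMap.lineMap_apply_zero, sub_zero, div_one, c] at hslope
  linarith

noncomputable def bregmanDiv (h : E → ℝ) (p q : E) : ℝ :=
  h p - h q - fderiv ℝ h q (p - q)

theorem bregmanDiv_add_bregmanDiv (h : E → ℝ) (p q : E) :
    bregmanDiv h p q + bregmanDiv h q p = (fderiv ℝ h p - fderiv ℝ h q) (p - q) := by
  simp only [bregmanDiv, sub_apply, ← neg_sub p q, map_neg]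
  ring

variable {h : E → ℝ}

theorem bregmanDiv_nonneg (hh : ConvexOn ℝ univ h) {q : E} (hd : DifferentiableAt ℝ h q)
    (p : E) : 0 ≤ bregmanDiv h p q := by
  have := hh.add_fderiv_sub_le hd p
  unfold bregmanDiv
  linarith

theorem hasFDerivAt_bregmanDiv_left {p : E} (hd : DifferentiableAt ℝ h p) (q : E) :
    HasFDerivAt (fun z => bregmanDiv h z q) (fderiv ℝ h p - fderiv ℝ h q) p := by
  have hlin : HasFDerivAt (fun z => fderiv ℝ h q (z - q)) (fderiv ℝ h q) p := by
    simpa using ((fderiv ℝ h q).hasFDerivAt (x := p)).sub_const (fderiv ℝ h q q)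
  exact (hd.hasFDerivAt.sub_const (h q)).sub hlin

/-- Descent of one Bregman proximal-gradient step `y ∈ argmin_z { ℓ z + g z + c D_h(z, x) }`,
where `ℓ` is the gradient of the explicitly treated function `f` at `x`. -/
theorem add_le_sub_bregmanDiv_of_isMinOn {f g : E → ℝ} {ℓ : E →L[ℝ] ℝ} {L c : ℝ} {x y : E}
    (hh : ConvexOn ℝ univ h) (hhx : DifferentiableAt ℝ h x) (hhy : DifferentiableAt ℝ h y)
    (hg : ConvexOn ℝ univ g) (hgy : DifferentiableAt ℝ g y) (hLc : L ≤ c)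
    (hf : f y ≤ f x + ℓ (y - x) + L * bregmanDiv h y x)
    (hmin : IsMinOn (fun z => ℓ z + g z + c * bregmanDiv h z x) univ y) :
    f y + g y ≤ f x + g x - c * bregmanDiv h x y := by
  have hopt : ℓ + fderiv ℝ g y + c • (fderiv ℝ h y - fderiv ℝ h x) = 0 :=
    (hmin.isLocalMin Filter.univ_mem).hasFDerivAt_eq_zero
      ((ℓ.hasFDerivAt.add hgy.hasFDerivAt).add
        ((hasFDerivAt_bregmanDiv_left hhy x).const_mul c))
  have hopt_dir := congrArg (fun T : E →L[ℝ] ℝ => T (x - y)) hopt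
  have hthree := bregmanDiv_add_bregmanDiv h x y
  simp only [add_apply, smul_apply, sub_apply, zero_apply, smul_eq_mul] at hopt_dir hthree
  have hgrad_g := hg.add_fderiv_sub_le hgy x
  have hℓ : ℓ (y - x) = -ℓ (x - y) := by rw [← map_neg, neg_sub]
  have habsorb : L * bregmanDiv h y x ≤ c * bregmanDiv h y x :=
    mul_le_mul_of_nonneg_right hLc (bregmanDiv_nonneg hh hhx y)
  linear_combination hf + hgrad_g + habsorb + hℓ - hopt_dir + c * hthree

end Bregman

/-- **Per-cycle descent of Bregman Peaceman-Rachford splitting under relative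
smoothness.**  Let `f`, `g` be convex differentiable (gradients `gf`, `gg`),
`L`-relatively smooth with respect to a Legendre function `h` (gradient `gh`,
Bregman distance `D`), let `F = f + g` and `0 < γ ≤ 1/L`.  If
`y^k = argmin_y { f(x^k) + ⟨∇f(x^k), y - x^k⟩ + g(y) + (1/γ) D(y, x^k) }` and
`x^{k+1} = argmin_x { g(y^k) + ⟨∇g(y^k), x - y^k⟩ + f(x) + (1/γ) D(x, y^k) }`, then
`F(y^k) ≤ F(x^k) - (1/γ) D(x^k, y^k)`, `F(x^{k+1}) ≤ F(y^k) - (1/γ) D(y^k, x^{k+1})`,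
and `F(x^{k+1}) ≤ F(x^k) - (1/γ) D(x^k, y^k) - (1/γ) D(y^k, x^{k+1})`. -/
theorem bprs_per_cycle_descent (n : ℕ)
    (h : (Fin n → ℝ) → ℝ) (gh : (Fin n → ℝ) → (Fin n → ℝ))
    (hconv : StrictConvexOn ℝ Set.univ h)
    (hdiffh : Differentiable ℝ h)
    (hgradh : ∀ p q, (fderiv ℝ h p) q = ∑ i, gh p i * q i)
    (D : (Fin n → ℝ) → (Fin n → ℝ) → ℝ)
    (hD : ∀ p q, D p q = h p - h q - ∑ i, gh q i * (p i - q i))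
    (f g : (Fin n → ℝ) → ℝ) (gf gg : (Fin n → ℝ) → (Fin n → ℝ))
    (hfconv : ConvexOn ℝ Set.univ f) (hgconv : ConvexOn ℝ Set.univ g)
    (hfd : Differentiable ℝ f)
    (hfgrad : ∀ p q, (fderiv ℝ f p) q = ∑ i, gf p i * q i)
    (hgd : Differentiable ℝ g)
    (hggrad : ∀ p q, (fderiv ℝ g p) q = ∑ i, gg p i * q i)
    (L γ : ℝ) (hL : 0 < L) (hγ0 : 0 < γ) (hγL : γ ≤ 1 / L)
    (hfsmooth : ∀ a b, f a ≤ f b + (∑ i, gf b i * (a i - b i)) + L * D a b)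
    (hgsmooth : ∀ a b, g a ≤ g b + (∑ i, gg b i * (a i - b i)) + L * D a b)
    (xk yk xk1 : Fin n → ℝ)
    (hyk : ∀ y', f xk + (∑ i, gf xk i * (yk i - xk i)) + g yk + (1/γ) * D yk xk
        ≤ f xk + (∑ i, gf xk i * (y' i - xk i)) + g y' + (1/γ) * D y' xk)
    (hxk1 : ∀ x', g yk + (∑ i, gg yk i * (xk1 i - yk i)) + f xk1 + (1/γ) * D xk1 yk
        ≤ g yk + (∑ i, gg yk i * (x' i - yk i)) + f x' + (1/γ) * D x' yk) :
    (f yk + g yk ≤ f xk + g xk - (1/γ) * D xk yk)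
    ∧ (f xk1 + g xk1 ≤ f yk + g yk - (1/γ) * D yk xk1)
    ∧ (f xk1 + g xk1 ≤ f xk + g xk - (1/γ) * D xk yk - (1/γ) * D yk xk1) := by
  have hsum : ∀ {φ : (Fin n → ℝ) → ℝ} {gφ : (Fin n → ℝ) → Fin n → ℝ},
      (∀ p q, fderiv ℝ φ p q = ∑ i, gφ p i * q i) →
      ∀ a b, ∑ i, gφ b i * (a i - b i) = fderiv ℝ φ b (a - b) := fun hφ a b => by
    simp [hφ]
  obtain rfl : D = bregmanDiv h := funext₂ fun p q => by rw [hD, bregmanDiv, hsum hgradh]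
  simp only [hsum hfgrad, hsum hggrad] at hfsmooth hgsmooth hyk hxk1
  have hLγ : L ≤ 1 / γ := (le_one_div hL hγ0).mpr hγL
  have hy := add_le_sub_bregmanDiv_of_isMinOn hconv.convexOn (hdiffh xk) (hdiffh yk) hgconv
    (hgd yk) hLγ (hfsmooth yk xk) <| isMinOn_univ_iff.mpr fun z => by
      have := hyk z; simp only [map_sub] at this ⊢; linarith
  have hx := add_le_sub_bregmanDiv_of_isMinOn hconv.convexOn (hdiffh yk) (hdiffh xk1) hfconv
    (hfd xk1) hLγ (hgsmooth xk1 yk) <| isMinOn_univ_iff.mpr fun z => by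
      have := hxk1 z; simp only [map_sub] at this ⊢; linarith
  exact ⟨hy, by linarith, by linarith⟩
end

section
/- Vanishing Bregman residuals of BPRS under relative smoothness (Theorem A.1): Under the assumptions that f and g are convex differentiable and L-relatively smooth with respect to a Legendre function h, that F = f + g attains its minimum F(x*) = F*, and that 0 < γ ≤ 1/L, the sequences generated by y^k := argmin_y { f(x^k) + ⟨∇f(x^k), y − x^k⟩ + g(y) + (1/γ) D_h(y, x^k) } and x^{k+1} := argmin_x { g(y^k) + ⟨∇g(y^k), x − y^k⟩ + f(x) + (1/γ) D_h(x, y^k) } satisfy (1/γ) Σ_{k=0}^N ( D_h(x^k, y^k) + D_h(y^k, x^{k+1}) ) ≤ F(x^0) − F* for every N, and consequently lim_{k→∞} D_h(x^k, y^k) = 0 and lim_{k→∞} D_h(y^k, x^{k+1}) = 0. -/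
/-!
Each half-step of BPRS is a Bregman proximal step on one of `f`, `g` with the other one
linearized. By the three-point inequality of Chen–Teboulle, tested at the prox center, and by
relative smoothness of the linearized function (which `γ ≤ 1/L` lets the proximal term absorb),
each half-step decreases `F = f + g` by at least `1/γ` times its Bregman residual. Telescoping
against `F ≥ F*` bounds the partial sums of the nonnegative residuals, which are therefore
summable and tend to `0`.
-/

open Filter Finset Set Topology

section

variable {E : Type*} [NormedAddCommGroup E] [NormedSpace ℝ E]

/-- Along the segment from `y` to `z`, convexity bounds `ψ y - ψ z` by slopes of `r` at `y`,
which tend to `0`. -/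
theorem ConvexOn.isMinOn_of_isMinOn_add {ψ r : E → ℝ} {y : E} (hψ : ConvexOn ℝ univ ψ)
    (hr : HasFDerivAt r (0 : E →L[ℝ] ℝ) y) (hmin : IsMinOn (ψ + r) univ y) :
    IsMinOn ψ univ y := by
  intro z _
  set ρ : ℝ → ℝ := fun t => r (y + t • (z - y))
  have hρ : HasDerivAt ρ 0 0 := by
    have hline : HasDerivAt (fun t : ℝ => y + t • (z - y)) (z - y) 0 := by
      simpa using ((hasDerivAt_id (0 : ℝ)).smul_const (z - y)).const_add y
    exact (hr.comp_hasDerivAt_of_eq 0 hline (by simp)).congr_deriv (by simp)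
  have hslope : Tendsto (slope ρ 0) (𝓝[>] 0) (𝓝 0) :=
    (hasDerivAt_iff_tendsto_slope.mp hρ).mono_left (nhdsGT_le_nhdsNE 0)
  have hbound : ∀ t ∈ Ioo (0 : ℝ) 1, ψ y - ψ z ≤ slope ρ 0 t := by
    rintro t ⟨ht0, ht1⟩
    have hseg : (1 - t) • y + t • z = y + t • (z - y) := by module
    have hconv := hψ.2 (mem_univ y) (mem_univ z) (sub_nonneg.2 ht1.le) ht0.le (sub_add_cancel 1 t)
    have hle : ψ y + r y ≤ ψ (y + t • (z - y)) + r (y + t • (z - y)) :=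
      hmin (mem_univ (y + t • (z - y)))
    rw [hseg, smul_eq_mul, smul_eq_mul] at hconv
    rw [slope_def_field, sub_zero, le_div_iff₀ ht0]
    simp only [ρ, zero_smul, add_zero]
    nlinarith
  simpa using ge_of_tendsto hslope (eventually_of_mem (Ioo_mem_nhdsGT one_pos) hbound)

theorem ConvexOn.isMinOn_of_hasFDerivAt_zero {ψ : E → ℝ} {y : E} (hψ : ConvexOn ℝ univ ψ)
    (hψy : HasFDerivAt ψ (0 : E →L[ℝ] ℝ) y) : IsMinOn ψ univ y :=
  hψ.isMinOn_of_isMinOn_add (r := -ψ) (by simpa using hψy.neg) fun z _ => by simp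

noncomputable def bregman (h : E → ℝ) (p q : E) : ℝ :=
  h p - h q - fderiv ℝ h q (p - q)

variable {h : E → ℝ}

@[simp]
theorem bregman_self (q : E) : bregman h q q = 0 := by
  simp [bregman]

theorem hasFDerivAt_bregman_self {q : E} (hq : DifferentiableAt ℝ h q) :
    HasFDerivAt (fun p => bregman h p q) (0 : E →L[ℝ] ℝ) q := by
  have := (hq.hasFDerivAt.sub_const (h q)).sub
    ((fderiv ℝ h q).hasFDerivAt.comp q ((hasFDerivAt_id q).sub_const q))
  exact this.congr_fderiv (by ext; simp)

theorem convexOn_bregman_left (hh : ConvexOn ℝ univ h) (q : E) :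
    ConvexOn ℝ univ fun p => bregman h p q := by
  refine ((hh.sub ((fderiv ℝ h q).toLinearMap.concaveOn convex_univ)).add_const
    (fderiv ℝ h q q - h q)).congr fun p _ => ?_
  simp only [bregman, map_sub, Pi.add_apply, Pi.sub_apply, ContinuousLinearMap.coe_coe]
  ring

theorem bregman_nonneg (hh : ConvexOn ℝ univ h) {q : E} (hq : DifferentiableAt ℝ h q) (p : E) :
    0 ≤ bregman h p q := by
  simpa using (convexOn_bregman_left hh q).isMinOn_of_hasFDerivAt_zero
    (hasFDerivAt_bregman_self hq) (mem_univ p)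

theorem bregman_three_point (z y c : E) :
    bregman h z c = bregman h z y + bregman h y c + (fderiv ℝ h y - fderiv ℝ h c) (z - y) := by
  simp only [bregman, sub_apply, map_sub]
  ring

theorem bregman_three_point_le {ψ : E → ℝ} {s : ℝ} {c y : E} (hψ : ConvexOn ℝ univ ψ)
    (hy : DifferentiableAt ℝ h y)
    (hmin : ∀ z, ψ y + s * bregman h y c ≤ ψ z + s * bregman h z c) (z : E) :
    ψ y + s * bregman h y c + s * bregman h z y ≤ ψ z + s * bregman h z c := by
  set ψ' : E → ℝ := fun z => ψ z + s * bregman h z c - s * bregman h z y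
  -- `D(·, c) - D(·, y)` is affine, so `ψ'` is convex.
  have hψ' : ConvexOn ℝ univ ψ' := by
    refine ((hψ.add ((s • (fderiv ℝ h y - fderiv ℝ h c)).toLinearMap.convexOn
      convex_univ)).add_const (s * bregman h y c - s * (fderiv ℝ h y - fderiv ℝ h c) y)).congr
      fun z _ => ?_
    simp only [ψ', bregman_three_point (h := h) z y c, Pi.add_apply,
      ContinuousLinearMap.coe_coe, smul_apply, sub_apply, map_sub, smul_eq_mul]
    ring
  have hr : HasFDerivAt (fun z => s * bregman h z y) (0 : E →L[ℝ] ℝ) y := by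
    simpa using (hasFDerivAt_bregman_self hy).const_mul s
  have : ψ' y ≤ ψ' z :=
    hψ'.isMinOn_of_isMinOn_add hr (fun z _ => by simpa [ψ'] using hmin z) (mem_univ z)
  simp only [ψ', bregman_self, mul_zero, sub_zero] at this
  linarith

/-- `y` is a Bregman proximal step on `u` from `c`, with `v` linearized at `c` (`ℓ` standing for
its gradient there). -/
theorem bregman_prox_step_descent {u v : E → ℝ} {ℓ : E →ₗ[ℝ] ℝ} {L s : ℝ} {c y : E}
    (hh : ConvexOn ℝ univ h) (hhd : Differentiable ℝ h) (hu : ConvexOn ℝ univ u) (hLs : L ≤ s)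
    (hv : v y ≤ v c + ℓ (y - c) + L * bregman h y c)
    (hmin : ∀ z, v c + ℓ (y - c) + u y + s * bregman h y c
      ≤ v c + ℓ (z - c) + u z + s * bregman h z c) :
    s * bregman h c y ≤ v c + u c - (v y + u y) := by
  have hψ : ConvexOn ℝ univ fun z => v c + ℓ (z - c) + u z := by
    refine (((ℓ.convexOn convex_univ).add hu).add_const (v c - ℓ c)).congr fun z _ => ?_
    simp only [map_sub, Pi.add_apply]
    ring
  have h3 := bregman_three_point_le hψ (hhd y) hmin c
  simp only [sub_self, map_zero, add_zero, bregman_self, mul_zero] at h3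
  have hD := mul_nonneg (sub_nonneg.mpr hLs) (bregman_nonneg hh (hhd c) y)
  nlinarith

end

theorem mul_sum_range_le_of_descent {a Φ : ℕ → ℝ} {s m : ℝ}
    (hdesc : ∀ k, s * a k ≤ Φ k - Φ (k + 1)) (hm : ∀ k, m ≤ Φ k) (N : ℕ) :
    s * ∑ k ∈ range N, a k ≤ Φ 0 - m := by
  calc s * ∑ k ∈ range N, a k ≤ ∑ k ∈ range N, (Φ k - Φ (k + 1)) := by
        rw [mul_sum]; exact sum_le_sum fun k _ => hdesc k
    _ = Φ 0 - Φ N := sum_range_sub' Φ N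
    _ ≤ Φ 0 - m := by linarith [hm N]

theorem tendsto_zero_of_mul_sum_range_le {a : ℕ → ℝ} {s B : ℝ} (hs : 0 < s) (ha : ∀ k, 0 ≤ a k)
    (hB : ∀ N, s * ∑ k ∈ range N, a k ≤ B) : Tendsto a atTop (𝓝 0) :=
  (summable_of_sum_range_le ha fun N => (le_div_iff₀' hs).mpr (hB N)).tendsto_atTop_zero

theorem bprs_vanishing_residuals_general (n : ℕ)
    (h : (Fin n → ℝ) → ℝ) (gh : (Fin n → ℝ) → (Fin n → ℝ))
    (hconv : StrictConvexOn ℝ Set.univ h)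
    (hdiffh : Differentiable ℝ h)
    (hgradh : ∀ p q, (fderiv ℝ h p) q = ∑ i, gh p i * q i)
    (D : (Fin n → ℝ) → (Fin n → ℝ) → ℝ)
    (hD : ∀ p q, D p q = h p - h q - ∑ i, gh q i * (p i - q i))
    (f g : (Fin n → ℝ) → ℝ) (gf gg : (Fin n → ℝ) → (Fin n → ℝ))
    (hfconv : ConvexOn ℝ Set.univ f) (hgconv : ConvexOn ℝ Set.univ g)
    (L γ : ℝ) (hγ0 : 0 < γ) (hγL : γ ≤ 1 / L)
    (hfsmooth : ∀ a b, f a ≤ f b + (∑ i, gf b i * (a i - b i)) + L * D a b)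
    (hgsmooth : ∀ a b, g a ≤ g b + (∑ i, gg b i * (a i - b i)) + L * D a b)
    (x y : ℕ → Fin n → ℝ)
    (hy : ∀ k y',
      f (x k) + (∑ i, gf (x k) i * (y k i - x k i)) + g (y k) + (1/γ) * D (y k) (x k)
        ≤ f (x k) + (∑ i, gf (x k) i * (y' i - x k i)) + g y' + (1/γ) * D y' (x k))
    (hx : ∀ k x',
      g (y k) + (∑ i, gg (y k) i * (x (k+1) i - y k i)) + f (x (k+1))
          + (1/γ) * D (x (k+1)) (y k)
        ≤ g (y k) + (∑ i, gg (y k) i * (x' i - y k i)) + f x' + (1/γ) * D x' (y k))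
    (xstar : Fin n → ℝ) (hstar : ∀ p, f xstar + g xstar ≤ f p + g p) :
    (∀ N : ℕ, (1/γ) * ∑ k ∈ Finset.range (N+1), (D (x k) (y k) + D (y k) (x (k+1)))
        ≤ (f (x 0) + g (x 0)) - (f xstar + g xstar))
    ∧ Filter.Tendsto (fun k => D (x k) (y k)) Filter.atTop (nhds 0)
    ∧ Filter.Tendsto (fun k => D (y k) (x (k+1))) Filter.atTop (nhds 0) := by
  obtain rfl : D = bregman h := funext₂ fun p q => by rw [hD, bregman, hgradh]; rfl
  have hLγ : L ≤ 1 / γ := by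
    rcases le_or_gt L 0 with hL | hL
    · exact hL.trans (by positivity)
    · exact (le_one_div hγ0 hL).mp hγL
  have hDnn : ∀ p q, 0 ≤ bregman h p q := fun p q => bregman_nonneg hconv.convexOn (hdiffh q) p
  have hdesc : ∀ k, (1 / γ) * (bregman h (x k) (y k) + bregman h (y k) (x (k + 1)))
      ≤ (f (x k) + g (x k)) - (f (x (k + 1)) + g (x (k + 1))) := fun k => by
    have hystep := bregman_prox_step_descent (ℓ := dotProductBilin ℝ ℝ (gf (x k)))
      hconv.convexOn hdiffh hgconv hLγ (hfsmooth _ _) (hy k)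
    have hxstep := bregman_prox_step_descent (ℓ := dotProductBilin ℝ ℝ (gg (y k)))
      hconv.convexOn hdiffh hfconv hLγ (hgsmooth _ _) (hx k)
    linarith
  have hsum := mul_sum_range_le_of_descent (Φ := fun k => f (x k) + g (x k)) hdesc
    fun k => hstar (x k)
  have hres := tendsto_zero_of_mul_sum_range_le (one_div_pos.mpr hγ0)
    (fun k => add_nonneg (hDnn _ _) (hDnn _ _)) hsum
  exact ⟨fun N => hsum (N + 1),
    squeeze_zero (fun k => hDnn _ _) (fun k => le_add_of_nonneg_right (hDnn _ _)) hres,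
    squeeze_zero (fun k => hDnn _ _) (fun k => le_add_of_nonneg_left (hDnn _ _)) hres⟩

/-- **Vanishing Bregman residuals of BPRS under relative smoothness (Theorem A.1).**
Let `f`, `g` be convex differentiable and `L`-relatively smooth with respect to a
Legendre function `h`, let `F = f + g` attain its minimum at `x*`, and `0 < γ ≤ 1/L`.
Then the BPRS sequences satisfy
`(1/γ) Σ_{k=0}^N (D(x^k, y^k) + D(y^k, x^{k+1})) ≤ F(x^0) - F(x*)` for every `N`,
and hence `D(x^k, y^k) → 0` and `D(y^k, x^{k+1}) → 0`. -/
theorem bprs_vanishing_residuals (n : ℕ)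
    (h : (Fin n → ℝ) → ℝ) (gh : (Fin n → ℝ) → (Fin n → ℝ))
    (hconv : StrictConvexOn ℝ Set.univ h)
    (hdiffh : Differentiable ℝ h)
    (hgradh : ∀ p q, (fderiv ℝ h p) q = ∑ i, gh p i * q i)
    (D : (Fin n → ℝ) → (Fin n → ℝ) → ℝ)
    (hD : ∀ p q, D p q = h p - h q - ∑ i, gh q i * (p i - q i))
    (f g : (Fin n → ℝ) → ℝ) (gf gg : (Fin n → ℝ) → (Fin n → ℝ))
    (hfconv : ConvexOn ℝ Set.univ f) (hgconv : ConvexOn ℝ Set.univ g)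
    (hfd : Differentiable ℝ f)
    (hfgrad : ∀ p q, (fderiv ℝ f p) q = ∑ i, gf p i * q i)
    (hgd : Differentiable ℝ g)
    (hggrad : ∀ p q, (fderiv ℝ g p) q = ∑ i, gg p i * q i)
    (L γ : ℝ) (hL : 0 < L) (hγ0 : 0 < γ) (hγL : γ ≤ 1 / L)
    (hfsmooth : ∀ a b, f a ≤ f b + (∑ i, gf b i * (a i - b i)) + L * D a b)
    (hgsmooth : ∀ a b, g a ≤ g b + (∑ i, gg b i * (a i - b i)) + L * D a b)
    (x y : ℕ → Fin n → ℝ)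
    (hy : ∀ k y',
      f (x k) + (∑ i, gf (x k) i * (y k i - x k i)) + g (y k) + (1/γ) * D (y k) (x k)
        ≤ f (x k) + (∑ i, gf (x k) i * (y' i - x k i)) + g y' + (1/γ) * D y' (x k))
    (hx : ∀ k x',
      g (y k) + (∑ i, gg (y k) i * (x (k+1) i - y k i)) + f (x (k+1))
          + (1/γ) * D (x (k+1)) (y k)
        ≤ g (y k) + (∑ i, gg (y k) i * (x' i - y k i)) + f x' + (1/γ) * D x' (y k))
    (xstar : Fin n → ℝ) (hstar : ∀ p, f xstar + g xstar ≤ f p + g p) :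
    (∀ N : ℕ, (1/γ) * ∑ k ∈ Finset.range (N+1), (D (x k) (y k) + D (y k) (x (k+1)))
        ≤ (f (x 0) + g (x 0)) - (f xstar + g xstar))
    ∧ Filter.Tendsto (fun k => D (x k) (y k)) Filter.atTop (nhds 0)
    ∧ Filter.Tendsto (fun k => D (y k) (x (k+1))) Filter.atTop (nhds 0) :=
  bprs_vanishing_residuals_general n h gh hconv hdiffh hgradh D hD f g gf gg hfconv hgconv L γ hγ0
    hγL hfsmooth hgsmooth x y hy hx xstar hstar
end

section
/- Bregman proximal point inequality: Let f be a proper convex function, h a Legendre function, γ > 0, x ∈ int dom h, and suppose w minimizes f(·) + (1/γ) D_h(·, x) with w ∈ int dom h. Then for every y ∈ dom f ∩ dom h: γ ( f(y) − f(w) ) ≥ D_h(y, w) − D_h(y, x) + D_h(w, x). -/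
/-!
Since `D_h(·, x) = h - h x - ⟨∇h x, · - x⟩` is differentiable with gradient `∇h(·) - ∇h x`,
first-order optimality of `w` for the nonsmooth sum `γ f + D_h(·, x)` says that
`∇h x - ∇h w` is a subgradient of `γ f` at `w`: compare the value at `w` with the values along
the segment `[w, y]`, where convexity bounds `f` by its chord, and apply Fermat's rule at the
endpoint. The three-point identity turns `⟨∇h x - ∇h w, y - w⟩` into
`D_h(y, w) - D_h(y, x) + D_h(w, x)`.
-/

open Set

section

variable {E : Type*} [NormedAddCommGroup E] [NormedSpace ℝ E]

theorem ConvexOn.neg_fderiv_le_sub_of_isMinOn_add {f g : E → ℝ} {g' : E →L[ℝ] ℝ} {w : E}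
    (hf : ConvexOn ℝ univ f) (hg : HasFDerivAt g g' w) (hmin : IsMinOn (f + g) univ w)
    (y : E) : -g' (y - w) ≤ f y - f w := by
  set ψ : ℝ → ℝ := fun t => g (w + t • (y - w)) + t * (f y - f w)
  have hψ_min : IsMinOn ψ (Icc 0 1) 0 := by
    rintro t ⟨ht0, ht1⟩
    have hchord : f (w + t • (y - w)) ≤ (1 - t) * f w + t * f y := by
      rw [show w + t • (y - w) = (1 - t) • w + t • y by module]
      exact hf.2 (mem_univ w) (mem_univ y) (sub_nonneg.2 ht1) ht0 (by ring)
    have := isMinOn_univ_iff.1 hmin (w + t • (y - w))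
    simp only [Pi.add_apply] at this
    show ψ 0 ≤ ψ t
    simp only [ψ, zero_smul, add_zero, zero_mul]
    linarith
  have hψ_deriv : HasDerivAt ψ (g' (y - w) + (f y - f w)) 0 := by
    have hline : HasDerivAt (fun t : ℝ => w + t • (y - w)) (y - w) 0 := by
      simpa using ((hasDerivAt_id (0 : ℝ)).smul_const (y - w)).const_add w
    have hg₀ : HasFDerivAt g g' (w + (0 : ℝ) • (y - w)) := by rwa [zero_smul, add_zero]
    have hcomp := hg₀.comp_hasDerivAt 0 hline
    exact (hcomp.add ((hasDerivAt_id' (0 : ℝ)).mul_const (f y - f w))).congr_deriv (by ring)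
  have hone : (1 : ℝ) ∈ posTangentConeAt (Icc 0 1) 0 :=
    mem_posTangentConeAt_of_segment_subset (by simp [segment_eq_Icc])
  have := hψ_min.localize.hasFDerivWithinAt_nonneg
    hψ_deriv.hasFDerivAt.hasFDerivWithinAt hone
  rw [ContinuousLinearMap.toSpanSingleton_apply, one_smul] at this
  linarith

noncomputable def bregmanDivergence (h : E → ℝ) (p q : E) : ℝ :=
  h p - h q - fderiv ℝ h q (p - q)

theorem bregmanDivergence_three_point (h : E → ℝ) (x y w : E) :
    bregmanDivergence h y w - bregmanDivergence h y x + bregmanDivergence h w x =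
      fderiv ℝ h x (y - w) - fderiv ℝ h w (y - w) := by
  have hsplit : y - x = (y - w) + (w - x) := by abel
  simp only [bregmanDivergence, hsplit, map_add]
  ring

theorem hasFDerivAt_bregmanDivergence_left {h : E → ℝ} {w : E} (hh : DifferentiableAt ℝ h w)
    (x : E) :
    HasFDerivAt (fun p => bregmanDivergence h p x) (fderiv ℝ h w - fderiv ℝ h x) w := by
  simp only [bregmanDivergence, map_sub]
  exact (hh.hasFDerivAt.sub_const (h x)).sub ((fderiv ℝ h x).hasFDerivAt.sub_const _)

theorem bregmanDivergence_three_point_le_of_isMinOn {f h : E → ℝ} {γ : ℝ} {x w : E}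
    (hf : ConvexOn ℝ univ f) (hh : DifferentiableAt ℝ h w) (hγ : 0 < γ)
    (hw : IsMinOn (fun p => f p + γ⁻¹ * bregmanDivergence h p x) univ w) (y : E) :
    bregmanDivergence h y w - bregmanDivergence h y x + bregmanDivergence h w x ≤
      γ * (f y - f w) := by
  have hmin : IsMinOn ((γ • f) + fun p => bregmanDivergence h p x) univ w := by
    refine isMinOn_univ_iff.2 fun p => ?_
    have := mul_le_mul_of_nonneg_left (isMinOn_univ_iff.1 hw p) hγ.le
    simpa only [Pi.add_apply, Pi.smul_apply, smul_eq_mul, mul_add, ← mul_assoc,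
      mul_inv_cancel₀ hγ.ne', one_mul] using this
  have := (hf.smul hγ.le).neg_fderiv_le_sub_of_isMinOn_add
    (hasFDerivAt_bregmanDivergence_left hh x) hmin y
  simp only [sub_apply, smul_eq_mul] at this
  rw [bregmanDivergence_three_point]
  linarith

end

theorem bregman_proximal_point_inequality_general (n : ℕ)
    (f : (Fin n → ℝ) → ℝ) (hf : ConvexOn ℝ Set.univ f)
    (h : (Fin n → ℝ) → ℝ) (gh : (Fin n → ℝ) → (Fin n → ℝ))
    (hdiff : Differentiable ℝ h)
    (hgrad : ∀ p q, (fderiv ℝ h p) q = ∑ i, gh p i * q i)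
    (D : (Fin n → ℝ) → (Fin n → ℝ) → ℝ)
    (hD : ∀ p q, D p q = h p - h q - ∑ i, gh q i * (p i - q i))
    (γ : ℝ) (hγ : 0 < γ) (x w : Fin n → ℝ)
    (hw : ∀ p, f w + (1/γ) * D w x ≤ f p + (1/γ) * D p x) :
    ∀ y, γ * (f y - f w) ≥ D y w - D y x + D w x := by
  have hD_eq : D = bregmanDivergence h := by
    ext p q
    rw [hD, bregmanDivergence, hgrad]
    rfl
  subst hD_eq
  exact bregmanDivergence_three_point_le_of_isMinOn hf (hdiff w) hγ
    (isMinOn_univ_iff.2 fun p => by simpa only [one_div] using hw p)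

/-- **Bregman proximal point inequality.**
If `w` minimizes `f(·) + (1/γ) D_h(·, x)` for a proper convex `f` and a Legendre
function `h` (strictly convex, differentiable with gradient `gh`), then for every `y`:
`γ (f y - f w) ≥ D_h(y, w) - D_h(y, x) + D_h(w, x)`. -/
theorem bregman_proximal_point_inequality (n : ℕ)
    (f : (Fin n → ℝ) → ℝ) (hf : ConvexOn ℝ Set.univ f)
    (h : (Fin n → ℝ) → ℝ) (gh : (Fin n → ℝ) → (Fin n → ℝ))
    (hconv : StrictConvexOn ℝ Set.univ h)
    (hdiff : Differentiable ℝ h)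
    (hgrad : ∀ p q, (fderiv ℝ h p) q = ∑ i, gh p i * q i)
    (D : (Fin n → ℝ) → (Fin n → ℝ) → ℝ)
    (hD : ∀ p q, D p q = h p - h q - ∑ i, gh q i * (p i - q i))
    (γ : ℝ) (hγ : 0 < γ) (x w : Fin n → ℝ)
    (hw : ∀ p, f w + (1/γ) * D w x ≤ f p + (1/γ) * D p x) :
    ∀ y, γ * (f y - f w) ≥ D y w - D y x + D w x :=
  bregman_proximal_point_inequality_general n f hf h gh hdiff hgrad D hD γ hγ x w hw
end

section
/- One-step mirror subgradient inequality: Let Δ be the probability simplex in ℝ^n, f a convex function with im(∇h*) ⊂ dom f, h a Legendre function that is σ-strongly convex with respect to the ℓ₁ norm on Δ, γ > 0, w ∈ Δ ∩ int dom h, f'(w) ∈ ∂f(w) with ‖f'(w)‖_∞ ≤ G, and define x̄ := ∇h*(∇h(w) − γ f'(w)), assumed to lie in Δ. Then for every y ∈ Δ ∩ dom h: D_h(y, x̄) ≤ D_h(y, w) − (1/2) D_h(x̄, w) + γ ( f(y) − f(w) ) + γ²G²/σ. -/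
/-- **One-step mirror subgradient inequality.**  Let `Δ` be the probability simplex
in `ℝⁿ`, `f` convex, `h` a Legendre function (gradient `gh`, inverse gradient
`ghs = ∇h*`) that is `σ`-strongly convex with respect to the `ℓ₁` norm on `Δ`,
`γ > 0`, `w ∈ Δ`, `fs ∈ ∂f(w)` with `‖fs‖_∞ ≤ G`, and
`x̄ := ∇h*(∇h(w) - γ fs) ∈ Δ`.  Then for every `y ∈ Δ`:
`D_h(y, x̄) ≤ D_h(y, w) - (1/2) D_h(x̄, w) + γ (f y - f w) + γ²G²/σ`. -/
theorem one_step_mirror_subgradient_inequality (n : ℕ)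
    (h : (Fin n → ℝ) → ℝ) (gh ghs : (Fin n → ℝ) → (Fin n → ℝ))
    (hconv : StrictConvexOn ℝ Set.univ h)
    (hinv1 : ∀ a, ghs (gh a) = a)
    (hinv2 : ∀ s, gh (ghs s) = s)
    (D : (Fin n → ℝ) → (Fin n → ℝ) → ℝ)
    (hD : ∀ a c, D a c = h a - h c - ∑ i, gh c i * (a i - c i))
    (σ G : ℝ) (hσ : 0 < σ) (hG : 0 ≤ G)
    (hstrong : ∀ a ∈ stdSimplex ℝ (Fin n), ∀ c ∈ stdSimplex ℝ (Fin n),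
      σ / 2 * (∑ i, |a i - c i|) ^ 2 ≤ D a c)
    (f : (Fin n → ℝ) → ℝ) (hf : ConvexOn ℝ Set.univ f)
    (γ : ℝ) (hγ : 0 < γ)
    (w : Fin n → ℝ) (hw : w ∈ stdSimplex ℝ (Fin n))
    (fs : Fin n → ℝ)
    (hfs : ∀ c, f w + ∑ i, fs i * (c i - w i) ≤ f c)
    (hfsbd : ∀ i, |fs i| ≤ G)
    (xbar : Fin n → ℝ) (hxbar : xbar = ghs (gh w - γ • fs))
    (hxbarΔ : xbar ∈ stdSimplex ℝ (Fin n)) :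
    ∀ y ∈ stdSimplex ℝ (Fin n),
      D y xbar ≤ D y w - (1/2) * D xbar w + γ * (f y - f w) + γ^2 * G^2 / σ := by

  intro y hy
  have hghxi : ∀ i, gh xbar i = gh w i - γ * fs i := by
    intro i
    rw [hxbar, hinv2]
    simp [smul_eq_mul]
  set t := ∑ i, |xbar i - w i| with ht
  have hstr := hstrong xbar hxbarΔ w hw
  have h1 : ∑ i, fs i * (y i - w i) ≤ f y - f w := by
    have := hfs y; linarith
  have h2 : ∑ i, fs i * (w i - xbar i) ≤ G * t := by
    rw [ht, Finset.mul_sum]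
    apply Finset.sum_le_sum
    intro i _
    calc fs i * (w i - xbar i) ≤ |fs i * (w i - xbar i)| := le_abs_self _
      _ = |fs i| * |xbar i - w i| := by rw [abs_mul, abs_sub_comm]
      _ ≤ G * |xbar i - w i| := mul_le_mul_of_nonneg_right (hfsbd i) (abs_nonneg _)
  have hsplit : ∑ i, fs i * (y i - xbar i)
      = ∑ i, fs i * (y i - w i) + ∑ i, fs i * (w i - xbar i) := by
    rw [← Finset.sum_add_distrib]
    apply Finset.sum_congr rfl
    intro i _; ring
  have hkey : D y xbar = D y w - D xbar w + γ * ∑ i, fs i * (y i - xbar i) := by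
    rw [hD y xbar, hD y w, hD xbar w]
    have esum : ∑ i, gh xbar i * (y i - xbar i)
        = ∑ i, gh w i * (y i - w i) - ∑ i, gh w i * (xbar i - w i)
          - γ * ∑ i, fs i * (y i - xbar i) := by
      rw [Finset.mul_sum, ← Finset.sum_sub_distrib, ← Finset.sum_sub_distrib]
      apply Finset.sum_congr rfl
      intro i _
      rw [hghxi]; ring
    rw [esum]; ring
  have hamgm : γ * (G * t) ≤ σ / 4 * t ^ 2 + γ ^ 2 * G ^ 2 / σ := by
    have hc : γ ^ 2 * G ^ 2 / σ * σ = γ ^ 2 * G ^ 2 := div_mul_cancel₀ _ (ne_of_gt hσ)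
    nlinarith [sq_nonneg (σ * t - 2 * γ * G), hσ, mul_pos hσ hσ]
  have hstr2 : σ / 4 * t ^ 2 ≤ (1/2) * D xbar w := by linarith
  have h2' : γ * ∑ i, fs i * (w i - xbar i) ≤ γ * (G * t) :=
    mul_le_mul_of_nonneg_left h2 (le_of_lt hγ)
  have h1' : γ * ∑ i, fs i * (y i - w i) ≤ γ * (f y - f w) :=
    mul_le_mul_of_nonneg_left h1 (le_of_lt hγ)
  rw [hkey, hsplit]
  linarith
end

section
/- Bregman proximal step inequality: Let g be a proper convex function, h a Legendre function, γ > 0, x̄ ∈ int dom h, and let x⁺ := argmin_x { g(x) + (1/γ) D_h(x, x̄) }, assumed to lie in int dom h. Then for every y ∈ dom g ∩ dom h: γ ( g(x⁺) − g(y) ) + D_h(y, x⁺) ≤ D_h(y, x̄) − D_h(x⁺, x̄). -/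
/-!
Minimality of `x⁺` for `γ g + D_h(·, x̄)`, tested along the segment from `x⁺` to `y` and combined
with the convexity of `g`, gives the first-order condition
`γ (g x⁺ - g y) ≤ ⟨∇h x⁺ - ∇h x̄, y - x⁺⟩`. The three-point identity of Bregman distances rewrites
the right-hand side as `D_h(y, x̄) - D_h(x⁺, x̄) - D_h(y, x⁺)`.
-/

open Set

variable {E : Type*} [NormedAddCommGroup E] [NormedSpace ℝ E]

noncomputable def bregmanDist (h : E → ℝ) (x y : E) : ℝ :=
  h x - h y - fderiv ℝ h y (x - y)

theorem bregmanDist_three_point (h : E → ℝ) (x y z : E) :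
    bregmanDist h y z - bregmanDist h x z - bregmanDist h y x =
      (fderiv ℝ h x - fderiv ℝ h z) (y - x) := by
  have hsplit : y - z = (y - x) + (x - z) := by abel
  simp only [bregmanDist, hsplit, map_add, sub_apply]
  ring

theorem hasFDerivAt_bregmanDist_left {h : E → ℝ} {h' : E →L[ℝ] ℝ} {x : E}
    (hh : HasFDerivAt h h' x) (z : E) :
    HasFDerivAt (fun p => bregmanDist h p z) (h' - fderiv ℝ h z) x := by
  have hlin : HasFDerivAt (fun p => fderiv ℝ h z (p - z)) (fderiv ℝ h z) x :=
    (fderiv ℝ h z).hasFDerivAt.comp x ((hasFDerivAt_id x).sub_const z)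
  exact (hh.sub_const (h z)).sub hlin

theorem ConvexOn.sub_le_fderiv_of_isMinOn_add {f φ : E → ℝ} {φ' : E →L[ℝ] ℝ} {s : Set E}
    {x y : E} (hf : ConvexOn ℝ s f) (hφ : HasFDerivAt φ φ' x) (hmin : IsMinOn (f + φ) s x)
    (hx : x ∈ s) (hy : y ∈ s) :
    f x - f y ≤ φ' (y - x) := by
  set ψ : ℝ → ℝ := fun t => φ (x + t • (y - x)) + t * (f y - f x)
  -- along the segment, convexity bounds `f` by its chord, so `ψ` dominates `(f + φ) - f x`
  have hψmin : IsMinOn ψ (Icc 0 1) 0 := by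
    rintro t ⟨ht0, ht1⟩
    have hchord : f (x + t • (y - x)) ≤ f x + t * (f y - f x) := by
      have hpt : (1 - t) • x + t • y = x + t • (y - x) := by
        rw [smul_sub, sub_smul, one_smul]; abel
      have hconv := hf.2 hx hy (sub_nonneg.2 ht1) ht0 (sub_add_cancel 1 t)
      rw [hpt, smul_eq_mul, smul_eq_mul] at hconv
      linarith
    have hmin_t := hmin (hf.1.add_smul_sub_mem hx hy ⟨ht0, ht1⟩)
    simp only [mem_ofPred_eq, Pi.add_apply] at hmin_t
    simp only [ψ, zero_smul, add_zero, zero_mul, mem_ofPred_eq]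
    linarith
  have hline : HasDerivAt (fun t : ℝ => x + t • (y - x)) (y - x) 0 := by
    simpa using ((hasDerivAt_id (0 : ℝ)).smul_const (y - x)).const_add x
  have hψ : HasDerivAt ψ (φ' (y - x) + (f y - f x)) 0 := by
    have hφline := hφ.comp_hasDerivAt_of_eq 0 hline (by simp)
    exact one_mul (f y - f x) ▸ hφline.add ((hasDerivAt_id (0 : ℝ)).mul_const (f y - f x))
  have hone : (1 : ℝ) ∈ posTangentConeAt (Icc 0 1) (0 : ℝ) := by
    simpa using sub_mem_posTangentConeAt_of_segment_subset (segment_eq_Icc zero_le_one).subset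
  have hψ_nonneg := hψmin.localize.hasFDerivWithinAt_nonneg hψ.hasFDerivAt.hasFDerivWithinAt hone
  rw [ContinuousLinearMap.toSpanSingleton_apply, one_smul] at hψ_nonneg
  linarith

theorem bregman_proximal_step_inequality_general (n : ℕ)
    (g : (Fin n → ℝ) → ℝ) (hg : ConvexOn ℝ Set.univ g)
    (h : (Fin n → ℝ) → ℝ) (gh : (Fin n → ℝ) → (Fin n → ℝ))
    (hdiff : Differentiable ℝ h)
    (hgrad : ∀ p q, (fderiv ℝ h p) q = ∑ i, gh p i * q i)
    (D : (Fin n → ℝ) → (Fin n → ℝ) → ℝ)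
    (hD : ∀ p q, D p q = h p - h q - ∑ i, gh q i * (p i - q i))
    (γ : ℝ) (hγ : 0 < γ) (xbar xplus : Fin n → ℝ)
    (hxplus : ∀ p, g xplus + (1/γ) * D xplus xbar ≤ g p + (1/γ) * D p xbar) :
    ∀ y, γ * (g xplus - g y) + D y xplus ≤ D y xbar - D xplus xbar := by
  intro y
  have hD_eq : ∀ p q, D p q = bregmanDist h p q := by
    intro p q
    simp only [hD, bregmanDist, hgrad, Pi.sub_apply]
  have hmin : IsMinOn (γ • g + fun p => bregmanDist h p xbar) univ xplus := by
    intro p _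
    have hscaled := mul_le_mul_of_nonneg_left (hxplus p) hγ.le
    simp only [mul_add, ← mul_assoc, mul_one_div_cancel hγ.ne', one_mul, hD_eq] at hscaled
    simpa only [mem_ofPred_eq, Pi.add_apply, Pi.smul_apply, smul_eq_mul] using hscaled
  have hopt := (hg.smul hγ.le).sub_le_fderiv_of_isMinOn_add
    (hasFDerivAt_bregmanDist_left (hdiff xplus).hasFDerivAt xbar) hmin (mem_univ _) (mem_univ y)
  have h3 := bregmanDist_three_point h xplus y xbar
  simp only [smul_eq_mul] at hopt
  simp only [hD_eq]
  linarith

/-- **Bregman proximal step inequality.**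
If `x⁺` minimizes `g(·) + (1/γ) D_h(·, x̄)` for a proper convex `g` and a Legendre
function `h` (strictly convex, differentiable with gradient `gh`), then for every `y`:
`γ (g x⁺ - g y) + D_h(y, x⁺) ≤ D_h(y, x̄) - D_h(x⁺, x̄)`. -/
theorem bregman_proximal_step_inequality (n : ℕ)
    (g : (Fin n → ℝ) → ℝ) (hg : ConvexOn ℝ Set.univ g)
    (h : (Fin n → ℝ) → ℝ) (gh : (Fin n → ℝ) → (Fin n → ℝ))
    (hconv : StrictConvexOn ℝ Set.univ h)
    (hdiff : Differentiable ℝ h)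
    (hgrad : ∀ p q, (fderiv ℝ h p) q = ∑ i, gh p i * q i)
    (D : (Fin n → ℝ) → (Fin n → ℝ) → ℝ)
    (hD : ∀ p q, D p q = h p - h q - ∑ i, gh q i * (p i - q i))
    (γ : ℝ) (hγ : 0 < γ) (xbar xplus : Fin n → ℝ)
    (hxplus : ∀ p, g xplus + (1/γ) * D xplus xbar ≤ g p + (1/γ) * D p xbar) :
    ∀ y, γ * (g xplus - g y) + D y xplus ≤ D y xbar - D xplus xbar :=
  bregman_proximal_step_inequality_general n g hg h gh hdiff hgrad D hD γ hγ xbar xplus hxplus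
end

section
/- Mirror-averaging four-point identity: Let h be a Legendre function and let x, y' ∈ int dom h, and define x⁺ := ∇h*( (1/2) ∇h(x) + (1/2) ∇h(y') ). Then for every y ∈ dom h: 2 D_h(y, x⁺) = D_h(y, x) + D_h(y, y') − D_h(x⁺, y') − D_h(x⁺, x). -/
/-- **Mirror-averaging four-point identity.**
For a Legendre function `h` with gradient `gh` and inverse gradient `ghs = ∇h*`,
if `x⁺ = ∇h*((1/2)∇h(x) + (1/2)∇h(y'))`, then for every `y`:
`2 D_h(y, x⁺) = D_h(y, x) + D_h(y, y') - D_h(x⁺, y') - D_h(x⁺, x)`. -/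
theorem mirror_averaging_four_point_identity (n : ℕ)
    (h : (Fin n → ℝ) → ℝ) (gh ghs : (Fin n → ℝ) → (Fin n → ℝ))
    (hconv : StrictConvexOn ℝ Set.univ h)
    (hdiff : Differentiable ℝ h)
    (hgrad : ∀ p q, (fderiv ℝ h p) q = ∑ i, gh p i * q i)
    (hinv1 : ∀ p, ghs (gh p) = p)
    (hinv2 : ∀ s, gh (ghs s) = s)
    (D : (Fin n → ℝ) → (Fin n → ℝ) → ℝ)
    (hD : ∀ p q, D p q = h p - h q - ∑ i, gh q i * (p i - q i))
    (x y' xplus : Fin n → ℝ)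
    (hxp : xplus = ghs ((1/2 : ℝ) • gh x + (1/2 : ℝ) • gh y')) :
    ∀ y, 2 * D y xplus = D y x + D y y' - D xplus y' - D xplus x := by
  intro y
  have key : gh xplus = (1/2 : ℝ) • gh x + (1/2 : ℝ) • gh y' := by
    rw [hxp, hinv2]
  have e1 : ∑ i, gh xplus i * (y i - xplus i)
      = (1/2) * (∑ i, gh x i * (y i - xplus i))
        + (1/2) * (∑ i, gh y' i * (y i - xplus i)) := by
    rw [Finset.mul_sum, Finset.mul_sum, ← Finset.sum_add_distrib]
    refine Finset.sum_congr rfl fun i _ => ?_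
    rw [key]; simp; ring
  have e2 : (∑ i, gh x i * (y i - x i)) - (∑ i, gh x i * (xplus i - x i))
      = ∑ i, gh x i * (y i - xplus i) := by
    rw [← Finset.sum_sub_distrib]
    exact Finset.sum_congr rfl fun i _ => by ring
  have e3 : (∑ i, gh y' i * (y i - y' i)) - (∑ i, gh y' i * (xplus i - y' i))
      = ∑ i, gh y' i * (y i - xplus i) := by
    rw [← Finset.sum_sub_distrib]
    exact Finset.sum_congr rfl fun i _ => by ring
  simp only [hD]
  linarith
end

section
/- Fixed points of the composed Bregman forward-backward operator: Let h be a Legendre function, γ > 0, and let A and B be single-valued monotone operators (e.g., A = ∇f and B = ∇g for convex differentiable f, g) such that the Bregman resolvents J_{γA}^h and J_{γB}^h are single-valued and well defined. Then Fix( J_{γA}^h ∘ F_{γB}^h ∘ J_{γB}^h ∘ F_{γA}^h ) = (A+B)^{-1}(0), i.e., x satisfies x = J_{γA}^h( F_{γB}^h( J_{γB}^h( F_{γA}^h(x) ) ) ) if and only if A(x) + B(x) = 0. -/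
/-- **Fixed points of the composed Bregman forward-backward operator.**
For a Legendre function `h` with gradient `gh` and inverse gradient `ghs = ∇h*`,
`γ > 0`, and single-valued monotone operators `A`, `B` whose Bregman resolvents
`J_{γA}^h`, `J_{γB}^h` (characterized by `J_{γA}^h w = r ↔ ∇h r + γ A r = ∇h w`)
are single-valued and well defined, a point `x` is a fixed point of
`J_{γA}^h ∘ F_{γB}^h ∘ J_{γB}^h ∘ F_{γA}^h` (where `F_{γT}^h = ∇h* ∘ (∇h - γT)`)
if and only if `A x + B x = 0`. -/
theorem fixed_points_bregman_forward_backward_composition (n : ℕ)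
    (h : (Fin n → ℝ) → ℝ) (gh ghs : (Fin n → ℝ) → (Fin n → ℝ))
    (hconv : StrictConvexOn ℝ Set.univ h)
    (hdiff : Differentiable ℝ h)
    (hgrad : ∀ p q, (fderiv ℝ h p) q = ∑ i, gh p i * q i)
    (hinv1 : ∀ p, ghs (gh p) = p)
    (hinv2 : ∀ s, gh (ghs s) = s)
    (A B JA JB : (Fin n → ℝ) → (Fin n → ℝ))
    (hmonoA : ∀ p q, 0 ≤ ∑ i, (A p i - A q i) * (p i - q i))
    (hmonoB : ∀ p q, 0 ≤ ∑ i, (B p i - B q i) * (p i - q i))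
    (γ : ℝ) (hγ : 0 < γ)
    (hJA : ∀ w r, JA w = r ↔ gh r + γ • A r = gh w)
    (hJB : ∀ w r, JB w = r ↔ gh r + γ • B r = gh w) :
    ∀ x, (x = JA (ghs (gh (JB (ghs (gh x - γ • A x)))
                        - γ • B (JB (ghs (gh x - γ • A x)))))
          ↔ A x + B x = 0) := by

  intro x
  set z := JB (ghs (gh x - γ • A x)) with hzdef
  have hz : gh z + γ • B z = gh x - γ • A x := by
    have := (hJB (ghs (gh x - γ • A x)) z).mp rfl
    rwa [hinv2] at this
  constructor
  · intro hx
    have e1 : gh x + γ • A x = gh z - γ • B z := by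
      have := (hJA (ghs (gh z - γ • B z)) x).mp hx.symm
      rwa [hinv2] at this
    have hgxz : gh x = gh z := by
      funext i
      have h1 := congrFun e1 i
      have h2 := congrFun hz i
      simp only [Pi.add_apply, Pi.sub_apply, Pi.smul_apply, smul_eq_mul] at h1 h2
      linarith
    have hxz : x = z := by
      have : ghs (gh x) = ghs (gh z) := by rw [hgxz]
      rwa [hinv1, hinv1] at this
    funext i
    have h1 := congrFun e1 i
    have h2 := congrFun hz i
    rw [← hxz] at h1 h2
    simp only [Pi.add_apply, Pi.sub_apply, Pi.smul_apply, smul_eq_mul] at h1 h2 ⊢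
    have : γ * (A x i + B x i) = 0 := by linarith
    have := mul_eq_zero.mp this
    rcases this with hc | hc
    · exact absurd hc hγ.ne'
    · exact hc
  · intro hAB
    have hBx : B x = -A x := by
      funext i
      have := congrFun hAB i
      simp only [Pi.add_apply, Pi.neg_apply, Pi.zero_apply] at this ⊢
      linarith
    have hzx : z = x := by
      rw [hzdef]
      exact (hJB _ x).mpr (by rw [hinv2, hBx, smul_neg, sub_eq_add_neg])
    rw [hzx, hBx, smul_neg, sub_neg_eq_add]
    exact ((hJA _ x).mpr (by rw [hinv2])).symm
end
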